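/- Let A ∈ ℝ^{n×d} have full column rank with rows a_1,…,a_n, and let p ≥ 1. Let S_p be a matrix such that (1/2)‖Ax‖_p^p ≤ ‖S_pAx‖_p^p ≤ 2‖Ax‖_p^p for all x ∈ ℝ^d, and let M ∈ ℝ^{m×d} be a nonempty matrix each of whose rows is a row of A, satisfying ‖Mx‖_∞ ≥ d^{−1/2}‖Ax‖_∞ for all x ∈ ℝ^d. Define ŝ := d^{p/2} · max over rows m_j of M of σ_p^{S_pA}(m_j). Then (1/2) · max_{1≤i≤n} σ_p(a_i) ≤ ŝ ≤ 2 d^{p/2} · max_{1≤i≤n} σ_p(a_i). -/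
import Mathlib


open Matrix BigOperators

lemma sum_abs_rpow_nonneg {k : ℕ} (p : ℝ) (v : Fin k → ℝ) :
    0 ≤ ∑ i, |v i| ^ p :=
  Finset.sum_nonneg fun i _ => Real.rpow_nonneg (abs_nonneg _) p

lemma sum_abs_rpow_pos {k : ℕ} {p : ℝ} (hp : 0 < p) {v : Fin k → ℝ} (hv : v ≠ 0) :
    0 < ∑ i, |v i| ^ p := by
  obtain ⟨i, hi⟩ := Function.ne_iff.mp hv
  exact Finset.sum_pos' (fun j _ => Real.rpow_nonneg (abs_nonneg _) p)
    ⟨i, Finset.mem_univ i, Real.rpow_pos_of_pos (abs_pos.mpr hi) p⟩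

/-- The ℓp sensitivity of a vector `a` with respect to a matrix `B`:
`σ_p^B(a) = sup { |⟨a,x⟩|^p / ‖Bx‖_p^p : x, Bx ≠ 0 }`. -/
noncomputable def sens (p : ℝ) {m d : ℕ} (B : Matrix (Fin m) (Fin d) ℝ)
    (a : Fin d → ℝ) : ℝ :=
  sSup {r : ℝ | ∃ x : Fin d → ℝ, B.mulVec x ≠ 0 ∧
    r = |a ⬝ᵥ x| ^ p / ∑ i, |B.mulVec x i| ^ p}

lemma sens_nonneg (p : ℝ) {m d : ℕ} (B : Matrix (Fin m) (Fin d) ℝ) (a : Fin d → ℝ) :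
    0 ≤ sens p B a := by
  apply Real.sSup_nonneg
  rintro r ⟨x, hx, rfl⟩
  exact div_nonneg (Real.rpow_nonneg (abs_nonneg _) p) (sum_abs_rpow_nonneg p _)

/-- **Correctness of the maximum-ℓp-sensitivity estimator.**  Here `SA` is a
constant-factor ℓp subspace embedding of `A` (in the sense of pth powers of norms),
and `M` is an ℓ∞ subspace embedding of `A` consisting of rows of `A`.  Then
`ŝ := d^{p/2} · max_j σ_p^{SA}(m_j)` satisfies
`(1/2)·max_i σ_p(a_i) ≤ ŝ ≤ 2 d^{p/2}·max_i σ_p(a_i)`. -/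
theorem max_lp_sensitivity_estimate
    {n d m₁ m : ℕ} (A : Matrix (Fin n) (Fin d) ℝ)
    (hA : LinearIndependent ℝ Aᵀ)
    (p : ℝ) (hp : 1 ≤ p)
    (SA : Matrix (Fin m₁) (Fin d) ℝ)
    (hSA : ∀ x : Fin d → ℝ,
      (1 / 2) * ∑ j, |A.mulVec x j| ^ p ≤ ∑ j, |SA.mulVec x j| ^ p ∧
        ∑ j, |SA.mulVec x j| ^ p ≤ 2 * ∑ j, |A.mulVec x j| ^ p)
    (hm : 0 < m) (M : Matrix (Fin m) (Fin d) ℝ)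
    (hMrows : ∀ j : Fin m, ∃ k : Fin n, M j = A k)
    (hMinf : ∀ x : Fin d → ℝ,
      (⨆ j : Fin m, |M.mulVec x j|) ≥
        (Real.sqrt d)⁻¹ * ⨆ k : Fin n, |A.mulVec x k|) :
    (1 / 2) * (⨆ i : Fin n, sens p A (A i)) ≤
        (d : ℝ) ^ (p / 2) * (⨆ j : Fin m, sens p SA (M j)) ∧
      (d : ℝ) ^ (p / 2) * (⨆ j : Fin m, sens p SA (M j)) ≤
        2 * (d : ℝ) ^ (p / 2) * ⨆ i : Fin n, sens p A (A i) := by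
  haveI : Nonempty (Fin m) := Fin.pos_iff_nonempty.mp hm
  have hp0 : (0:ℝ) < p := lt_of_lt_of_le one_pos hp
  set D : ℝ := (d : ℝ) ^ (p / 2) with hD
  have hDnn : 0 ≤ D := Real.rpow_nonneg (Nat.cast_nonneg d) _
  -- SA x ≠ 0 whenever A x ≠ 0, and conversely
  have hASA : ∀ x : Fin d → ℝ, A.mulVec x ≠ 0 → SA.mulVec x ≠ 0 := by
    intro x hx h0
    have h1 : (0:ℝ) < ∑ j, |A.mulVec x j| ^ p := sum_abs_rpow_pos hp0 hx
    have h2 := (hSA x).1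
    rw [h0] at h2
    simp [Real.zero_rpow (ne_of_gt hp0)] at h2
    linarith
  have hSAA : ∀ x : Fin d → ℝ, SA.mulVec x ≠ 0 → A.mulVec x ≠ 0 := by
    intro x hx h0
    have h1 : (0:ℝ) < ∑ j, |SA.mulVec x j| ^ p := sum_abs_rpow_pos hp0 hx
    have h2 := (hSA x).2
    rw [h0] at h2
    simp [Real.zero_rpow (ne_of_gt hp0)] at h2
    linarith
  -- elementwise bounds on the sensitivity sets
  have hsetA : ∀ i : Fin n, ∀ r ∈ {r : ℝ | ∃ x : Fin d → ℝ, A.mulVec x ≠ 0 ∧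
      r = |A i ⬝ᵥ x| ^ p / ∑ j, |A.mulVec x j| ^ p}, r ≤ 1 := by
    rintro i r ⟨x, hx, rfl⟩
    have hPA : (0:ℝ) < ∑ j, |A.mulVec x j| ^ p := sum_abs_rpow_pos hp0 hx
    have hnum : |A i ⬝ᵥ x| ^ p ≤ ∑ j, |A.mulVec x j| ^ p := by
      have : |A.mulVec x i| ^ p ≤ ∑ j, |A.mulVec x j| ^ p :=
        Finset.single_le_sum (fun j _ => Real.rpow_nonneg (abs_nonneg _) p)
          (Finset.mem_univ i)
      exact this
    exact (div_le_one hPA).mpr hnum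
  have hsetSA : ∀ j : Fin m, ∀ r ∈ {r : ℝ | ∃ x : Fin d → ℝ, SA.mulVec x ≠ 0 ∧
      r = |M j ⬝ᵥ x| ^ p / ∑ l, |SA.mulVec x l| ^ p}, r ≤ 2 := by
    rintro j r ⟨x, hx, rfl⟩
    obtain ⟨k, hk⟩ := hMrows j
    have hPSA : (0:ℝ) < ∑ l, |SA.mulVec x l| ^ p := sum_abs_rpow_pos hp0 hx
    have hPA : (0:ℝ) < ∑ l, |A.mulVec x l| ^ p :=
      sum_abs_rpow_pos hp0 (hSAA x hx)
    have hnum : |M j ⬝ᵥ x| ^ p ≤ ∑ l, |A.mulVec x l| ^ p := by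
      rw [hk]
      exact Finset.single_le_sum (f := fun l => |A.mulVec x l| ^ p)
        (fun l _ => Real.rpow_nonneg (abs_nonneg _) p) (Finset.mem_univ k)
    have h2 := (hSA x).1
    rw [div_le_iff₀ hPSA]
    nlinarith
  have hsensA_le : ∀ i : Fin n, sens p A (A i) ≤ 1 := fun i =>
    Real.sSup_le (hsetA i) zero_le_one
  have hsensSA_le : ∀ j : Fin m, sens p SA (M j) ≤ 2 := fun j =>
    Real.sSup_le (hsetSA j) zero_le_two
  have hbddA : BddAbove (Set.range fun i : Fin n => sens p A (A i)) :=
    ⟨1, by rintro r ⟨i, rfl⟩; exact hsensA_le i⟩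
  have hbddSA : BddAbove (Set.range fun j : Fin m => sens p SA (M j)) :=
    ⟨2, by rintro r ⟨j, rfl⟩; exact hsensSA_le j⟩
  have hTnn : 0 ≤ ⨆ i : Fin n, sens p A (A i) :=
    Real.iSup_nonneg fun i => sens_nonneg p A (A i)
  have hSnn : 0 ≤ ⨆ j : Fin m, sens p SA (M j) :=
    Real.iSup_nonneg fun j => sens_nonneg p SA (M j)
  constructor
  · -- lower bound
    have key : (⨆ i : Fin n, sens p A (A i)) ≤
        2 * D * ⨆ j : Fin m, sens p SA (M j) := by
      apply Real.iSup_le _ (by positivity)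
      intro i
      apply Real.sSup_le _ (by positivity)
      rintro r ⟨x, hx, rfl⟩
      -- x ≠ 0, hence d > 0
      have hx0 : x ≠ 0 := by rintro rfl; simp at hx
      obtain ⟨i0, _⟩ := Function.ne_iff.mp hx0
      have hd : (0:ℝ) < d := by exact_mod_cast i0.pos
      have hsq : (0:ℝ) < Real.sqrt d := Real.sqrt_pos.mpr hd
      obtain ⟨j0, hj0⟩ := Finite.exists_max (fun j : Fin m => |M.mulVec x j|)
      have hsup_le : (⨆ j : Fin m, |M.mulVec x j|) ≤ |M.mulVec x j0| :=
        ciSup_le hj0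
      have hAi_le : |A.mulVec x i| ≤ ⨆ k : Fin n, |A.mulVec x k| :=
        le_ciSup (f := fun k : Fin n => |A.mulVec x k|)
          (Set.finite_range _).bddAbove i
      have h1 : (Real.sqrt d)⁻¹ * |A.mulVec x i| ≤ |M.mulVec x j0| := by
        calc (Real.sqrt d)⁻¹ * |A.mulVec x i|
            ≤ (Real.sqrt d)⁻¹ * ⨆ k : Fin n, |A.mulVec x k| := by
              apply mul_le_mul_of_nonneg_left hAi_le (by positivity)
          _ ≤ ⨆ j : Fin m, |M.mulVec x j| := hMinf x
          _ ≤ |M.mulVec x j0| := hsup_le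
      have h2 : |A.mulVec x i| ≤ Real.sqrt d * |M.mulVec x j0| :=
        (inv_mul_le_iff₀ hsq).mp h1
      have hsqD : (Real.sqrt d) ^ p = D := by
        rw [hD, show p / 2 = (1/2) * p by ring,
          Real.rpow_mul (Nat.cast_nonneg d), ← Real.sqrt_eq_rpow]
      have hnum : |A i ⬝ᵥ x| ^ p ≤ D * |M j0 ⬝ᵥ x| ^ p := by
        have := Real.rpow_le_rpow (abs_nonneg _) h2 (le_of_lt hp0)
        rw [Real.mul_rpow (Real.sqrt_nonneg _) (abs_nonneg _), hsqD] at this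
        exact this
      have hPA : (0:ℝ) < ∑ l, |A.mulVec x l| ^ p := sum_abs_rpow_pos hp0 hx
      have hPSA : (0:ℝ) < ∑ l, |SA.mulVec x l| ^ p :=
        sum_abs_rpow_pos hp0 (hASA x hx)
      have hPSA2 : (∑ l, |SA.mulVec x l| ^ p) ≤ 2 * ∑ l, |A.mulVec x l| ^ p :=
        (hSA x).2
      have hmem : |M j0 ⬝ᵥ x| ^ p / ∑ l, |SA.mulVec x l| ^ p ∈
          {r : ℝ | ∃ y : Fin d → ℝ, SA.mulVec y ≠ 0 ∧
            r = |M j0 ⬝ᵥ y| ^ p / ∑ l, |SA.mulVec y l| ^ p} :=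
        ⟨x, hASA x hx, rfl⟩
      have hs0 : |M j0 ⬝ᵥ x| ^ p / (∑ l, |SA.mulVec x l| ^ p) ≤ sens p SA (M j0) :=
        le_csSup ⟨2, hsetSA j0⟩ hmem
      have hS : sens p SA (M j0) ≤ ⨆ j : Fin m, sens p SA (M j) :=
        le_ciSup hbddSA j0
      have hstep : |A i ⬝ᵥ x| ^ p / (∑ l, |A.mulVec x l| ^ p) ≤
          2 * D * (|M j0 ⬝ᵥ x| ^ p / ∑ l, |SA.mulVec x l| ^ p) := by
        rw [mul_div_assoc' (2 * D), div_le_div_iff₀ hPA hPSA]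
        have hMnn : (0:ℝ) ≤ |M j0 ⬝ᵥ x| ^ p := Real.rpow_nonneg (abs_nonneg _) p
        nlinarith [mul_le_mul hnum hPSA2 (le_of_lt hPSA) (by positivity : (0:ℝ) ≤ D * |M j0 ⬝ᵥ x| ^ p)]
      calc |A i ⬝ᵥ x| ^ p / (∑ l, |A.mulVec x l| ^ p)
          ≤ 2 * D * (|M j0 ⬝ᵥ x| ^ p / ∑ l, |SA.mulVec x l| ^ p) := hstep
        _ ≤ 2 * D * sens p SA (M j0) := by
            apply mul_le_mul_of_nonneg_left hs0 (by positivity)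
        _ ≤ 2 * D * ⨆ j : Fin m, sens p SA (M j) := by
            apply mul_le_mul_of_nonneg_left hS (by positivity)
    linarith
  · -- upper bound
    have key : (⨆ j : Fin m, sens p SA (M j)) ≤
        2 * ⨆ i : Fin n, sens p A (A i) := by
      apply Real.iSup_le _ (by positivity)
      intro j
      obtain ⟨k, hk⟩ := hMrows j
      apply Real.sSup_le _ (by positivity)
      rintro r ⟨x, hx, rfl⟩
      have hAx : A.mulVec x ≠ 0 := hSAA x hx
      have hPA : (0:ℝ) < ∑ l, |A.mulVec x l| ^ p := sum_abs_rpow_pos hp0 hAx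
      have hPSA : (0:ℝ) < ∑ l, |SA.mulVec x l| ^ p := sum_abs_rpow_pos hp0 hx
      have hhalf : (1/2) * (∑ l, |A.mulVec x l| ^ p) ≤ ∑ l, |SA.mulVec x l| ^ p :=
        (hSA x).1
      have hmem : |A k ⬝ᵥ x| ^ p / ∑ l, |A.mulVec x l| ^ p ∈
          {r : ℝ | ∃ y : Fin d → ℝ, A.mulVec y ≠ 0 ∧
            r = |A k ⬝ᵥ y| ^ p / ∑ l, |A.mulVec y l| ^ p} := ⟨x, hAx, rfl⟩
      have hsA : |A k ⬝ᵥ x| ^ p / (∑ l, |A.mulVec x l| ^ p) ≤ sens p A (A k) :=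
        le_csSup ⟨1, hsetA k⟩ hmem
      have hT : sens p A (A k) ≤ ⨆ i : Fin n, sens p A (A i) := le_ciSup hbddA k
      have hnn : (0:ℝ) ≤ |M j ⬝ᵥ x| ^ p := Real.rpow_nonneg (abs_nonneg _) p
      have hstep : |M j ⬝ᵥ x| ^ p / (∑ l, |SA.mulVec x l| ^ p) ≤
          2 * (|A k ⬝ᵥ x| ^ p / ∑ l, |A.mulVec x l| ^ p) := by
        rw [hk, mul_div_assoc' 2, div_le_div_iff₀ hPSA hPA]
        have hnnA : (0:ℝ) ≤ |A k ⬝ᵥ x| ^ p := Real.rpow_nonneg (abs_nonneg _) p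
        nlinarith [mul_le_mul_of_nonneg_left
          (show (∑ l, |A.mulVec x l| ^ p) ≤ 2 * ∑ l, |SA.mulVec x l| ^ p by linarith) hnnA]
      calc |M j ⬝ᵥ x| ^ p / (∑ l, |SA.mulVec x l| ^ p)
          ≤ 2 * (|A k ⬝ᵥ x| ^ p / ∑ l, |A.mulVec x l| ^ p) := hstep
        _ ≤ 2 * sens p A (A k) := by
            apply mul_le_mul_of_nonneg_left hsA (by norm_num)
        _ ≤ 2 * ⨆ i : Fin n, sens p A (A i) := by
            apply mul_le_mul_of_nonneg_left hT (by norm_num)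
    calc D * (⨆ j : Fin m, sens p SA (M j))
        ≤ D * (2 * ⨆ i : Fin n, sens p A (A i)) :=
          mul_le_mul_of_nonneg_left key hDnn
      _ = 2 * D * ⨆ i : Fin n, sens p A (A i) := by ring
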